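/- Let V be a 4×4 unitary matrix, define (αβ;jk) := Im(V_{αj} V_{βk} conj(V_{αk}) conj(V_{βj})), J_{αj} := (α,α+1; j,j+1) for α, j ∈ {1,2,3}, let J be the 3×3 real matrix with entries J_{αj}, and let A be the 3×3 matrix with rows (1,−1,0), (−1,1,−1), (0,−1,1). Then: (i) the 3×3 matrix whose rows are indexed by (αβ) ∈ {(12),(23),(34)} and columns by (jk) ∈ {(24),(14),(13)}, with entry (αβ;jk), equals J·A; (ii) the 3×3 matrix with rows indexed by (αβ) ∈ {(24),(14),(13)} and columns by (jk) ∈ {(12),(23),(34)}, with entry (αβ;jk), equals A·J; and (iii) the 3×3 matrix with rows indexed by (αβ) ∈ {(24),(14),(13)} and columns by (jk) ∈ {(24),(14),(13)}, with entry (αβ;jk), equals A·J·A. -/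
import Mathlib


open Matrix ComplexConjugate

/-- The invariant phase (αβ;jk) := Im(V_{αj} V_{βk} conj(V_{αk}) conj(V_{βj}))
    of a 4×4 matrix V (indices here 0-based: paper's index i is `i-1`). -/
noncomputable def phase4 (V : Matrix (Fin 4) (Fin 4) ℂ) (α β j k : Fin 4) : ℝ :=
  (V α j * V β k * conj (V α k) * conj (V β j)).im

/-- The 3×3 matrix J with J_{αj} := (α, α+1; j, j+1). -/
noncomputable def Jmat (V : Matrix (Fin 4) (Fin 4) ℂ) : Matrix (Fin 3) (Fin 3) ℝ :=
  Matrix.of fun α j => phase4 V α.castSucc α.succ j.castSucc j.succ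

/-- The index pairs (24), (14), (13), 0-based: (1, 3), (0, 3), (0, 2). -/
def prs : Fin 3 → Fin 4 × Fin 4 := ![(1, 3), (0, 3), (0, 2)]

/-- The matrix A of Proposition 4. -/
def Amat : Matrix (Fin 3) (Fin 3) ℝ := !![1, -1, 0; -1, 1, -1; 0, -1, 1]

section aux

variable (V : Matrix (Fin 4) (Fin 4) ℂ)

lemma phase4_swapk (a b j k : Fin 4) : phase4 V a b k j = - phase4 V a b j k := by
  unfold phase4
  rw [show V a k * V b j * conj (V a j) * conj (V b k)
      = conj (V a j * V b k * conj (V a k) * conj (V b j)) by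
    simp only [_root_.map_mul, Complex.conj_conj]; ring]
  exact Complex.conj_im _

lemma phase4_swapa (a b j k : Fin 4) : phase4 V b a j k = - phase4 V a b j k := by
  unfold phase4
  rw [show V b j * V a k * conj (V b k) * conj (V a j)
      = conj (V a j * V b k * conj (V a k) * conj (V b j)) by
    simp only [_root_.map_mul, Complex.conj_conj]; ring]
  exact Complex.conj_im _

lemma phase4_diagk (a b j : Fin 4) : phase4 V a b j j = 0 := by
  unfold phase4
  rw [show V a j * V b j * conj (V a j) * conj (V b j)
      = (V a j * conj (V a j)) * (V b j * conj (V b j)) by ring]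
  simp [Complex.mul_conj, ← Complex.ofReal_mul]

lemma phase4_diaga (a j k : Fin 4) : phase4 V a a j k = 0 := by
  unfold phase4
  rw [show V a j * V a k * conj (V a k) * conj (V a j)
      = (V a j * conj (V a j)) * (V a k * conj (V a k)) by ring]
  simp [Complex.mul_conj, ← Complex.ofReal_mul]

variable (hV : V ∈ Matrix.unitaryGroup (Fin 4) ℂ)
include hV

lemma sumk {a b : Fin 4} (hab : a ≠ b) (j : Fin 4) :
    phase4 V a b j 0 + phase4 V a b j 1 + phase4 V a b j 2 + phase4 V a b j 3 = 0 := by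
  have hU : V * Vᴴ = 1 := by
    have := (Matrix.mem_unitaryGroup_iff).mp hV
    rwa [Matrix.star_eq_conjTranspose] at this
  have h0 : ∑ k, V b k * conj (V a k) = 0 := by
    have h := congrFun (congrFun hU b) a
    simpa [Matrix.mul_apply, Matrix.conjTranspose_apply, Matrix.one_apply,
      (Ne.symm hab)] using h
  have key : ∑ k, phase4 V a b j k = 0 := by
    unfold phase4
    rw [← Complex.im_sum]
    have : ∑ k, V a j * V b k * conj (V a k) * conj (V b j)
        = (V a j * conj (V b j)) * ∑ k, V b k * conj (V a k) := by
      rw [Finset.mul_sum]; exact Finset.sum_congr rfl fun k _ => by ring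
    rw [this, h0, mul_zero, Complex.zero_im]
  rwa [Fin.sum_univ_four] at key

lemma suma {j k : Fin 4} (hjk : j ≠ k) (b : Fin 4) :
    phase4 V 0 b j k + phase4 V 1 b j k + phase4 V 2 b j k + phase4 V 3 b j k = 0 := by
  have hU : Vᴴ * V = 1 := by
    have := (Matrix.mem_unitaryGroup_iff').mp hV
    rwa [Matrix.star_eq_conjTranspose] at this
  have h0 : ∑ a, V a j * conj (V a k) = 0 := by
    have h := congrFun (congrFun hU k) j
    simp only [Matrix.mul_apply, Matrix.conjTranspose_apply, Matrix.one_apply,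
      if_neg (Ne.symm hjk)] at h
    rw [← h]
    exact Finset.sum_congr rfl fun a _ => by rw [mul_comm]; rfl
  have key : ∑ a, phase4 V a b j k = 0 := by
    unfold phase4
    rw [← Complex.im_sum]
    have : ∑ a, V a j * V b k * conj (V a k) * conj (V b j)
        = (V b k * conj (V b j)) * ∑ a, V a j * conj (V a k) := by
      rw [Finset.mul_sum]; exact Finset.sum_congr rfl fun a _ => by ring
    rw [this, h0, mul_zero, Complex.zero_im]
  rwa [Fin.sum_univ_four] at key

lemma e13 {a b : Fin 4} (hab : a ≠ b) :
    phase4 V a b 1 3 = phase4 V a b 0 1 - phase4 V a b 1 2 := by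
  have h := sumk V hV hab 1
  have s := phase4_swapk V a b 0 1
  have d := phase4_diagk V a b 1
  linarith

lemma e02 {a b : Fin 4} (hab : a ≠ b) :
    phase4 V a b 0 2 = phase4 V a b 2 3 - phase4 V a b 1 2 := by
  have h := sumk V hV hab 2
  have s1 := phase4_swapk V a b 0 2
  have s2 := phase4_swapk V a b 1 2
  have d := phase4_diagk V a b 2
  linarith

lemma e03 {a b : Fin 4} (hab : a ≠ b) :
    phase4 V a b 0 3 = - phase4 V a b 0 1 + phase4 V a b 1 2 - phase4 V a b 2 3 := by
  have h := sumk V hV hab 0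
  have h2 := e02 V hV hab
  have d := phase4_diagk V a b 0
  linarith

lemma f13 {j k : Fin 4} (hjk : j ≠ k) :
    phase4 V 1 3 j k = phase4 V 0 1 j k - phase4 V 1 2 j k := by
  have h := suma V hV hjk 1
  have s1 := phase4_swapa V 1 2 j k
  have s2 := phase4_swapa V 1 3 j k
  have d := phase4_diaga V 1 j k
  linarith

lemma f02 {j k : Fin 4} (hjk : j ≠ k) :
    phase4 V 0 2 j k = phase4 V 2 3 j k - phase4 V 1 2 j k := by
  have h := suma V hV hjk 2
  have s1 := phase4_swapa V 0 2 j k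
  have s2 := phase4_swapa V 2 3 j k
  have d := phase4_diaga V 2 j k
  linarith

lemma f03 {j k : Fin 4} (hjk : j ≠ k) :
    phase4 V 0 3 j k = - phase4 V 0 1 j k + phase4 V 1 2 j k - phase4 V 2 3 j k := by
  have h := suma V hV hjk 0
  have h2 := f02 V hV hjk
  have s1 := phase4_swapa V 0 1 j k
  have s2 := phase4_swapa V 0 2 j k
  have s3 := phase4_swapa V 0 3 j k
  have d := phase4_diaga V 0 j k
  linarith

end aux

lemma cs0 : (0:Fin 3).castSucc = (0:Fin 4) := rfl
lemma cs1 : (1:Fin 3).castSucc = (1:Fin 4) := rfl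
lemma cs2 : (2:Fin 3).castSucc = (2:Fin 4) := rfl
lemma sc0 : (0:Fin 3).succ = (1:Fin 4) := rfl
lemma sc1 : (1:Fin 3).succ = (2:Fin 4) := rfl
lemma sc2 : (2:Fin 3).succ = (3:Fin 4) := rfl

set_option maxHeartbeats 1000000 in
/-- The 36 phases (αβ;jk) of a 4×4 unitary matrix are expressed via J, JA, AJ, AJA. -/
theorem phase4_matrices_JA (V : Matrix (Fin 4) (Fin 4) ℂ)
    (hV : V ∈ Matrix.unitaryGroup (Fin 4) ℂ) :
    (Matrix.of fun α c => phase4 V α.castSucc α.succ (prs c).1 (prs c).2)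
        = Jmat V * Amat
    ∧ (Matrix.of fun r j => phase4 V (prs r).1 (prs r).2 j.castSucc j.succ)
        = Amat * Jmat V
    ∧ (Matrix.of fun r c => phase4 V (prs r).1 (prs r).2 (prs c).1 (prs c).2)
        = Amat * Jmat V * Amat := by
  have h01 : (0:Fin 4) ≠ 1 := by decide
  have h12 : (1:Fin 4) ≠ 2 := by decide
  have h23 : (2:Fin 4) ≠ 3 := by decide
  have h13 : (1:Fin 4) ≠ 3 := by decide
  have h03 : (0:Fin 4) ≠ 3 := by decide
  have h02 : (0:Fin 4) ≠ 2 := by decide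
  refine ⟨?_, ?_, ?_⟩ <;>
    · ext r c
      fin_cases r <;> fin_cases c <;>
        simp [Jmat, Amat, prs, Matrix.mul_apply, Fin.sum_univ_three, Matrix.vecHead,
          Matrix.vecTail, Function.comp, cs0, cs1, cs2, sc0, sc1, sc2] <;>
        linarith [e13 V hV h01, e13 V hV h12, e13 V hV h23, e02 V hV h01, e02 V hV h12,
          e02 V hV h23, e03 V hV h01, e03 V hV h12, e03 V hV h23,
          f13 V hV h01, f13 V hV h12, f13 V hV h23, f02 V hV h01, f02 V hV h12,
          f02 V hV h23, f03 V hV h01, f03 V hV h12, f03 V hV h23,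
          f13 V hV h13, f13 V hV h03, f13 V hV h02, f02 V hV h13, f02 V hV h03,
          f02 V hV h02, f03 V hV h13, f03 V hV h03, f03 V hV h02]
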